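/- arXiv:2106.11080 — 2 statements merged into one kernel-verified Lean document; each statement's English description precedes it below -/
import Mathlib

section
/- Let q be odd, B a symmetric (m−1)×(m−1) matrix over F_q of rank 2t, and A a symmetric m×m matrix of rank 2t whose deletion of the first row and first column equals B. Then A is hyperbolic if and only if B is hyperbolic. Moreover A necessarily has the form A = [[uBuᵀ, uB],[Buᵀ, B]] for some row vector u ∈ F_q^{m−1}. -/
open Matrix

/-- Two square matrices define equivalent quadratic forms if one form is obtained from the
other by an invertible linear change of variables. -/
def QuadEquiv {F : Type*} [Field F] {n : ℕ} (A B : Matrix (Fin n) (Fin n) F) : Prop :=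
  ∃ L : Matrix (Fin n) (Fin n) F, IsUnit L.det ∧
    ∀ X : Fin n → F, X ⬝ᵥ A.mulVec X = (L.mulVec X) ⬝ᵥ B.mulVec (L.mulVec X)

/-- Matrix of the standard hyperbolic quadratic form `X₁X₂ + ⋯ + X_{2r−1}X_{2r}`
in `n` variables. -/
def stdHyp (F : Type*) [Field F] (n r : ℕ) : Matrix (Fin n) (Fin n) F :=
  Matrix.of fun i j =>
    if i.val % 2 = 0 ∧ j.val = i.val + 1 ∧ j.val < 2 * r then 1 else 0

/-- Matrix of the standard form `a X₁² + b X₁X₂ + c X₂² + X₃X₄ + ⋯ + X_{2r−1}X_{2r}`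
in `n` variables. -/
def stdEll (F : Type*) [Field F] (n r : ℕ) (a b c : F) : Matrix (Fin n) (Fin n) F :=
  Matrix.of fun i j =>
    if i.val = 0 ∧ j.val = 1 then b
    else if i.val = 0 ∧ j.val = 0 then a
    else if i.val = 1 ∧ j.val = 1 then c
    else if 2 ≤ i.val ∧ i.val % 2 = 0 ∧ j.val = i.val + 1 ∧ j.val < 2 * r then 1
    else 0

/-- A matrix is hyperbolic (of even rank `2r`) if its associated quadratic form is equivalent
to `k(X₁X₂ + ⋯ + X_{2r−1}X_{2r})` for some nonzero constant `k`. -/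
def IsHyp {F : Type*} [Field F] {n : ℕ} (A : Matrix (Fin n) (Fin n) F) (r : ℕ) : Prop :=
  ∃ k : F, k ≠ 0 ∧ QuadEquiv A (k • stdHyp F n r)

/-- A matrix is elliptic (of even rank `2r`) if its associated quadratic form is equivalent to
`k(f(X₁,X₂) + X₃X₄ + ⋯ + X_{2r−1}X_{2r})` for some nonzero `k` and some irreducible binary
quadratic `f(X,Y) = aX² + bXY + cY²`; over a finite field of odd order, irreducibility of `f`
is precisely the condition that the discriminant `b² − 4ac` is a non-square. -/
def IsEll {F : Type*} [Field F] {n : ℕ} (A : Matrix (Fin n) (Fin n) F) (r : ℕ) : Prop :=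
  ∃ k a b c : F, k ≠ 0 ∧ ¬ IsSquare (b ^ 2 - 4 * a * c) ∧
    QuadEquiv A (k • stdEll F n r a b c)

/-!
Equal rank forces the first row of `A` to be a combination `u` of the other rows, and symmetry
then gives the block form `A = [[u B uᵀ, u B], [B uᵀ, B]]`, i.e. `Q_A(X) = Q_B(X' + X₀ u)` where
`X = (X₀, X')`. A hyperbolic normalisation of `Q_B` thus extends to one of `Q_A`, with `X₀` as an
extra variable that does not occur in the form. Conversely, `e = (1, -u)` spans the kernel of
`X ↦ X' + X₀ u`, so `Q_A` is invariant under translation by `e`. In hyperbolic coordinates for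
`Q_A` this forces the image of `e` to vanish on the `2t` hyperbolic coordinates; eliminating one
of its nonzero remaining coordinates yields hyperbolic coordinates for `Q_B`.
-/

section

variable {F : Type*} [Field F]

theorem quadForm_stdHyp {n t : ℕ} (hn : 2 * t ≤ n) (Y : Fin n → F) :
    Y ⬝ᵥ stdHyp F n t *ᵥ Y = ∑ a : Fin t, Y ⟨2 * a, by omega⟩ * Y ⟨2 * a + 1, by omega⟩ := by
  simp only [dotProduct, mulVec, Finset.mul_sum, ← Fintype.sum_prod_type']
  symm
  refine Finset.sum_of_injOn
    (fun a : Fin t => ((⟨2 * a, by omega⟩, ⟨2 * a + 1, by omega⟩) : Fin n × Fin n))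
    ?_ (by simp) ?_ ?_
  · intro a _ b _ h
    simp only [Prod.mk.injEq, Fin.mk.injEq] at h
    exact Fin.ext (by omega)
  · rintro ⟨i, j⟩ - hij
    simp only [stdHyp, of_apply, mul_ite, ite_mul, mul_zero, zero_mul, ite_eq_right_iff]
    rintro ⟨hi, hj, hjt⟩
    exact absurd ⟨⟨i / 2, by omega⟩, by simp, by ext <;> simp <;> omega⟩ hij
  · intro a _
    simp [stdHyp, Nat.mul_mod_right]
    omega

theorem quadForm_stdHyp_congr {n n' t : ℕ} (hn : 2 * t ≤ n) (hn' : 2 * t ≤ n') {Y : Fin n → F}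
    {Y' : Fin n' → F} (h : ∀ i (hi : i < 2 * t), Y ⟨i, by omega⟩ = Y' ⟨i, by omega⟩) :
    Y ⬝ᵥ stdHyp F n t *ᵥ Y = Y' ⬝ᵥ stdHyp F n' t *ᵥ Y' := by
  rw [quadForm_stdHyp hn, quadForm_stdHyp hn']
  refine Finset.sum_congr rfl fun a _ => ?_
  rw [h _ (by omega), h (2 * a + 1) (by omega)]

theorem quadForm_stdHyp_add {n t : ℕ} (hn : 2 * t ≤ n) (Y Z : Fin n → F) :
    (Y + Z) ⬝ᵥ stdHyp F n t *ᵥ (Y + Z) = Y ⬝ᵥ stdHyp F n t *ᵥ Y + Z ⬝ᵥ stdHyp F n t *ᵥ Z +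
      ∑ a : Fin t, (Y ⟨2 * a, by omega⟩ * Z ⟨2 * a + 1, by omega⟩ +
        Y ⟨2 * a + 1, by omega⟩ * Z ⟨2 * a, by omega⟩) := by
  simp only [quadForm_stdHyp hn, Pi.add_apply, ← Finset.sum_add_distrib]
  exact Finset.sum_congr rfl fun a _ => by ring

theorem eq_zero_of_quadForm_stdHyp_add {n t : ℕ} (hn : 2 * t ≤ n) {Z : Fin n → F}
    (hZ : ∀ Y, (Y + Z) ⬝ᵥ stdHyp F n t *ᵥ (Y + Z) = Y ⬝ᵥ stdHyp F n t *ᵥ Y)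
    (i : Fin n) (hi : i.val < 2 * t) : Z i = 0 := by
  have hZZ : Z ⬝ᵥ stdHyp F n t *ᵥ Z = 0 := by simpa using hZ 0
  have hpolar : ∀ Y : Fin n → F, ∑ a : Fin t, (Y ⟨2 * a, by omega⟩ * Z ⟨2 * a + 1, by omega⟩ +
      Y ⟨2 * a + 1, by omega⟩ * Z ⟨2 * a, by omega⟩) = 0 := by
    intro Y
    have := hZ Y
    rw [quadForm_stdHyp_add hn, hZZ] at this
    linear_combination this
  obtain ⟨a, hia | hia⟩ : ∃ a : Fin t, i.val = 2 * a ∨ i.val = 2 * a + 1 :=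
    ⟨⟨i / 2, by omega⟩, by simp only; omega⟩
  all_goals
    rw [show i = ⟨i, by omega⟩ from rfl]
    simp only [hia]
  · have := hpolar (Pi.single ⟨2 * a + 1, by omega⟩ 1)
    rw [Finset.sum_eq_single a (fun b _ hb => by
      simp [Pi.single_apply, Fin.ext_iff, Fin.val_ne_of_ne hb]; omega) (by simp)] at this
    simpa [Pi.single_apply, Fin.ext_iff] using this
  · have := hpolar (Pi.single ⟨2 * a, by omega⟩ 1)
    rw [Finset.sum_eq_single a (fun b _ hb => by
      simp [Pi.single_apply, Fin.ext_iff, Fin.val_ne_of_ne hb]; omega) (by simp)] at this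
    simpa [Pi.single_apply, Fin.ext_iff] using this

theorem QuadEquiv.of_injective {n : ℕ} {A B : Matrix (Fin n) (Fin n) F}
    (Φ : (Fin n → F) →ₗ[F] Fin n → F) (hΦ : Function.Injective Φ)
    (h : ∀ X, X ⬝ᵥ A *ᵥ X = Φ X ⬝ᵥ B *ᵥ Φ X) : QuadEquiv A B := by
  have hL : (LinearMap.toMatrix' Φ).mulVec = Φ := funext (LinearMap.toMatrix'_mulVec Φ)
  exact ⟨LinearMap.toMatrix' Φ,
    (isUnit_iff_isUnit_det _).1 (mulVec_injective_iff_isUnit.1 (hL ▸ hΦ)), hL ▸ h⟩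

theorem quadForm_smul {n : Type*} [Fintype n] (k : F) (A : Matrix n n F) (X : n → F) :
    X ⬝ᵥ (k • A) *ᵥ X = k * (X ⬝ᵥ A *ᵥ X) := by
  rw [smul_mulVec, dotProduct_smul, smul_eq_mul]

theorem exists_vecMul_eq_row_zero {m : ℕ} {n : Type*} [Fintype n] (A : Matrix (Fin (m + 1)) n F)
    (h : A.rank ≤ (A.submatrix Fin.succ id).rank) :
    ∃ u : Fin m → F, u ᵥ* A.submatrix Fin.succ id = A 0 := by
  have hle : Submodule.span F (Set.range (A.submatrix Fin.succ id).row) ≤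
      Submodule.span F (Set.range A.row) :=
    Submodule.span_mono (Set.range_comp_subset_range Fin.succ A)
  rw [rank_eq_finrank_span_row, rank_eq_finrank_span_row] at h
  have hrow : A 0 ∈ Submodule.span F (Set.range (A.submatrix Fin.succ id).row) := by
    rw [Submodule.eq_of_le_of_finrank_le hle h]
    exact Submodule.subset_span ⟨0, rfl⟩
  obtain ⟨u, hu⟩ := (Submodule.mem_span_range_iff_exists_fun F).1 hrow
  exact ⟨u, by rw [vecMul_eq_sum, ← hu]; rfl⟩

theorem exists_border_of_rank_le {m : ℕ} {A : Matrix (Fin (m + 1)) (Fin (m + 1)) F} (hA : A.IsSymm)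
    (h : A.rank ≤ (A.submatrix Fin.succ Fin.succ).rank) :
    ∃ u : Fin m → F, A 0 0 = u ⬝ᵥ A.submatrix Fin.succ Fin.succ *ᵥ u ∧
      (∀ j, A 0 j.succ = (u ᵥ* A.submatrix Fin.succ Fin.succ) j) ∧
      (∀ i, A i.succ 0 = (u ᵥ* A.submatrix Fin.succ Fin.succ) i) := by
  set B := A.submatrix Fin.succ Fin.succ
  obtain ⟨u, hu⟩ := exists_vecMul_eq_row_zero A
    (h.trans (by simpa using rank_submatrix_le (A.submatrix Fin.succ id) id Fin.succ))
  have h0s : ∀ j, A 0 j.succ = (u ᵥ* B) j := fun j => by rw [← hu]; rfl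
  have hs0 : ∀ i, A i.succ 0 = (u ᵥ* B) i := fun i => by rw [← h0s, hA.apply]
  refine ⟨u, ?_, h0s, hs0⟩
  rw [← hu, dotProduct_mulVec, dotProduct_comm]
  simp [vecMul, dotProduct, hs0]

def borderMap {m : ℕ} (u : Fin m → F) : (Fin (m + 1) → F) →ₗ[F] Fin m → F :=
  LinearMap.funLeft F F Fin.succ + (LinearMap.proj 0).smulRight u

@[simp]
theorem borderMap_apply {m : ℕ} (u : Fin m → F) (X : Fin (m + 1) → F) :
    borderMap u X = Fin.tail X + X 0 • u :=
  rfl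

theorem quadForm_eq_quadForm_borderMap {m : ℕ} {A : Matrix (Fin (m + 1)) (Fin (m + 1)) F}
    {B : Matrix (Fin m) (Fin m) F} (hB : B.IsSymm) {u : Fin m → F}
    (h00 : A 0 0 = u ⬝ᵥ B *ᵥ u) (h0s : ∀ j, A 0 j.succ = (u ᵥ* B) j)
    (hs0 : ∀ i, A i.succ 0 = (u ᵥ* B) i) (hss : ∀ i j, A i.succ j.succ = B i j)
    (X : Fin (m + 1) → F) :
    X ⬝ᵥ A *ᵥ X = borderMap u X ⬝ᵥ B *ᵥ borderMap u X := by
  have hBu : B *ᵥ u = u ᵥ* B := by rw [← mulVec_transpose, hB.eq]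
  have hAX : A *ᵥ X = Fin.cons (A 0 0 * X 0 + (u ᵥ* B) ⬝ᵥ Fin.tail X)
      (X 0 • (u ᵥ* B) + B *ᵥ Fin.tail X) := by
    ext i
    cases i using Fin.cases <;>
      simp [mulVec, dotProduct, Fin.sum_univ_succ, h00, h0s, hs0, hss, Fin.tail, mul_comm]
  have hsplit : X ⬝ᵥ A *ᵥ X = X 0 * (A 0 0 * X 0 + (u ᵥ* B) ⬝ᵥ Fin.tail X) +
      Fin.tail X ⬝ᵥ (X 0 • (u ᵥ* B) + B *ᵥ Fin.tail X) := by
    rw [dotProduct, Fin.sum_univ_succ, hAX]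
    rfl
  rw [hsplit, borderMap_apply, h00]
  simp only [mulVec_add, mulVec_smul, dotProduct_add, add_dotProduct, dotProduct_smul,
    smul_dotProduct, smul_eq_mul, hBu]
  rw [dotProduct_mulVec u, dotProduct_comm (Fin.tail X) (u ᵥ* B)]
  ring

theorem IsHyp.border {m t : ℕ} (h2t : 2 * t ≤ m) {A : Matrix (Fin (m + 1)) (Fin (m + 1)) F}
    {B : Matrix (Fin m) (Fin m) F} {u : Fin m → F}
    (hAB : ∀ X, X ⬝ᵥ A *ᵥ X = borderMap u X ⬝ᵥ B *ᵥ borderMap u X) (hB : IsHyp B t) :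
    IsHyp A t := by
  obtain ⟨k, hk, L, hL, hLB⟩ := hB
  have hLinj : Function.Injective L.mulVec :=
    mulVec_injective_iff_isUnit.2 ((isUnit_iff_isUnit_det L).2 hL)
  -- `Φ X = (L (borderMap u X), X 0)`: the new variable goes last, outside the hyperbolic part.
  let Φ : (Fin (m + 1) → F) →ₗ[F] Fin (m + 1) → F := LinearMap.pi
    (Fin.lastCases (LinearMap.proj 0) fun i => LinearMap.proj i ∘ₗ L.mulVecLin ∘ₗ borderMap u)
  have hΦ : ∀ X i, Φ X i.castSucc = (L *ᵥ borderMap u X) i := by simp [Φ]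
  have hΦlast : ∀ X, Φ X (Fin.last m) = X 0 := by simp [Φ]
  refine ⟨k, hk, QuadEquiv.of_injective Φ ?_ fun X => ?_⟩
  · rw [← LinearMap.ker_eq_bot, LinearMap.ker_eq_bot']
    intro X hX
    have h0 : X 0 = 0 := by rw [← hΦlast X, hX, Pi.zero_apply]
    have htail : borderMap u X = 0 := hLinj (by ext i; rw [← hΦ, hX]; simp)
    ext i
    cases i using Fin.cases with
    | zero => exact h0
    | succ i => simpa [h0, Fin.tail] using congr_fun htail i
  · rw [hAB, hLB, quadForm_smul, quadForm_smul]
    congr 1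
    exact quadForm_stdHyp_congr h2t (by omega) fun i hi => (hΦ X ⟨i, by omega⟩).symm

theorem IsHyp.of_border {m t : ℕ} (h2t : 2 * t ≤ m) {A : Matrix (Fin (m + 1)) (Fin (m + 1)) F}
    {B : Matrix (Fin m) (Fin m) F} {u : Fin m → F}
    (hAB : ∀ X, X ⬝ᵥ A *ᵥ X = borderMap u X ⬝ᵥ B *ᵥ borderMap u X) (hA : IsHyp A t) :
    IsHyp B t := by
  obtain ⟨k, hk, M, hM, hMA⟩ := hA
  have hMA' : ∀ X, X ⬝ᵥ A *ᵥ X = k * (M *ᵥ X ⬝ᵥ stdHyp F (m + 1) t *ᵥ (M *ᵥ X)) := fun X => by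
    rw [hMA, quadForm_smul]
  have hMinj := mulVec_injective_iff_isUnit.2 ((isUnit_iff_isUnit_det M).2 hM)
  set e : Fin (m + 1) → F := Fin.cons 1 (-u)
  have he : borderMap u e = 0 := by ext; simp [e]
  -- `e` spans the kernel of `borderMap u`, so translation by `M e` fixes the hyperbolic form.
  have hZ : ∀ i : Fin (m + 1), i.val < 2 * t → (M *ᵥ e) i = 0 := by
    refine eq_zero_of_quadForm_stdHyp_add (by omega) fun Y => ?_
    obtain ⟨X, rfl⟩ := mulVec_surjective_iff_isUnit.2 ((isUnit_iff_isUnit_det M).2 hM) Y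
    apply mul_left_cancel₀ hk
    rw [← mulVec_add, ← hMA', ← hMA', hAB, hAB, map_add, he, add_zero]
  obtain ⟨j, hj⟩ : ∃ j, (M *ᵥ e) j ≠ 0 := by
    by_contra! h
    have : e = 0 := hMinj (by rw [mulVec_zero]; exact funext h)
    simpa [e] using congr_fun this 0
  have hjt : 2 * t ≤ j := by
    by_contra
    exact hj (hZ j (by omega))
  -- `W y = M (0, y) - c • M e` with `c` chosen so that `W y j = 0`; deleting coordinate `j ≥ 2t`
  -- leaves the hyperbolic coordinates untouched.
  let ι : (Fin m → F) →ₗ[F] Fin (m + 1) → F := LinearMap.pi (Fin.cases 0 LinearMap.proj)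
  have hι : ∀ y, borderMap u (ι y) = y := fun y => by ext; simp [ι, Fin.tail]
  let N := M.mulVecLin ∘ₗ ι
  let W := N - (LinearMap.proj j ∘ₗ N).smulRight (((M *ᵥ e) j)⁻¹ • M *ᵥ e)
  have hWe : ∀ y, W y = M *ᵥ (ι y - ((M *ᵥ ι y) j * ((M *ᵥ e) j)⁻¹) • e) := fun y => by
    simp [W, N, mulVec_sub, mulVec_smul, smul_smul]
  have hWj : ∀ y, W y j = 0 := fun y => by simp [W, N, hj]
  let Φ := LinearMap.funLeft F F j.succAbove ∘ₗ W
  refine ⟨k, hk, QuadEquiv.of_injective Φ ?_ fun y => ?_⟩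
  · rw [← LinearMap.ker_eq_bot, LinearMap.ker_eq_bot']
    intro y hy
    have hW : W y = 0 := by
      ext i
      cases i using Fin.succAboveCases j with
      | x => exact hWj y
      | p i => exact congr_fun hy i
    obtain ⟨c, hc⟩ : ∃ c : F, W y = M *ᵥ (ι y - c • e) := ⟨_, hWe y⟩
    have hv : ι y - c • e = 0 := hMinj (by rw [← hc, hW, mulVec_zero])
    have hc0 : c = 0 := by simpa [ι, e] using congr_fun hv 0
    rw [← hι y, show ι y = 0 by simpa [hc0] using hv, map_zero]
  · calc y ⬝ᵥ B *ᵥ y = borderMap u (ι y) ⬝ᵥ B *ᵥ borderMap u (ι y) := by rw [hι]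
      _ = k * (N y ⬝ᵥ stdHyp F (m + 1) t *ᵥ N y) := by rw [← hAB, hMA']; rfl
      _ = Φ y ⬝ᵥ (k • stdHyp F m t) *ᵥ Φ y := by
        rw [quadForm_smul]
        congr 1
        refine quadForm_stdHyp_congr (by omega) h2t fun i hi => ?_
        have : j.succAbove ⟨i, by omega⟩ = ⟨i, by omega⟩ :=
          Fin.succAbove_of_castSucc_lt _ _ (by simp [Fin.lt_def]; omega)
        simp [Φ, W, this, hZ ⟨i, by omega⟩ hi]

end

theorem border_equal_rank_general (F : Type*) [Field F]
    (m t : ℕ)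
    (A : Matrix (Fin (m + 1)) (Fin (m + 1)) F) (hA : A.IsSymm) (hrA : A.rank = 2 * t)
    (B : Matrix (Fin m) (Fin m) F) (hB : B = A.submatrix Fin.succ Fin.succ)
    (hrB : B.rank = 2 * t) :
    (IsHyp A t ↔ IsHyp B t) ∧
    ∃ u : Fin m → F,
      A 0 0 = u ⬝ᵥ B.mulVec u ∧
      (∀ j : Fin m, A 0 j.succ = Matrix.vecMul u B j) ∧
      (∀ i : Fin m, A i.succ 0 = Matrix.vecMul u B i) := by
  have h2t : 2 * t ≤ m := hrB ▸ B.rank_le_height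
  subst hB
  obtain ⟨u, h00, h0s, hs0⟩ := exists_border_of_rank_le hA (by rw [hrA, hrB])
  have hAB := quadForm_eq_quadForm_borderMap (hA.submatrix Fin.succ) h00 h0s hs0 fun _ _ => rfl
  exact ⟨⟨IsHyp.of_border h2t hAB, IsHyp.border h2t hAB⟩, u, h00, h0s, hs0⟩

/-- If `A` is symmetric of rank `2t` and deleting its first row and column gives `B` also of
rank `2t`, then `A` is hyperbolic iff `B` is hyperbolic, and `A` has the form
`[[u B uᵀ, u B], [B uᵀ, B]]` for some row vector `u`. -/
theorem border_equal_rank (F : Type*) [Field F] [Fintype F] (hq : Odd (Fintype.card F))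
    (m t : ℕ)
    (A : Matrix (Fin (m + 1)) (Fin (m + 1)) F) (hA : A.IsSymm) (hrA : A.rank = 2 * t)
    (B : Matrix (Fin m) (Fin m) F) (hB : B = A.submatrix Fin.succ Fin.succ)
    (hrB : B.rank = 2 * t) :
    (IsHyp A t ↔ IsHyp B t) ∧
    ∃ u : Fin m → F,
      A 0 0 = u ⬝ᵥ B.mulVec u ∧
      (∀ j : Fin m, A 0 j.succ = Matrix.vecMul u B j) ∧
      (∀ i : Fin m, A i.succ 0 = Matrix.vecMul u B i) :=
  border_equal_rank_general F m t A hA hrA B hB hrB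
end

section
/- Let q be odd and c, α ∈ F_q* with both α/c and −α/c non-squares. Then the number of pairs (γ, T) ∈ F_q × F_q with γ² − α/c = T² is exactly q−1, all such pairs have γ ≠ 0 and T ≠ 0, and the set of nonzero square values γ² occurring among solutions has cardinality (q−1)/4. -/
/-!
Write `d = α / c`. Since `(γ - T)(γ + T) = d`, a solution is determined by the unit `u = γ - T`,
and every `u ∈ Fˣ` arises, via `γ = (u + d/u)/2`, `T = (d/u - u)/2`; so there are `q - 1`
solutions. As `-d` and `d` are non-squares, no solution has `γ = 0` or `T = 0`, and the solutions
with a prescribed value of `γ²` are exactly the four pairs `(±γ, ±T)`.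
-/

open Finset

section CommRing

variable {R : Type*} [CommRing R] {d γ T : R}

theorem ne_zero_left_of_sq_sub_eq_sq (hd : ¬IsSquare (-d)) (h : γ ^ 2 - d = T ^ 2) : γ ≠ 0 := by
  rintro rfl
  exact hd ⟨T, by linear_combination h⟩

theorem ne_zero_right_of_sq_sub_eq_sq (hd : ¬IsSquare d) (h : γ ^ 2 - d = T ^ 2) : T ≠ 0 := by
  rintro rfl
  exact hd ⟨γ, by linear_combination -h⟩

theorem sub_mul_add_eq_of_sq_sub_eq_sq (h : γ ^ 2 - d = T ^ 2) : (γ - T) * (γ + T) = d := by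
  linear_combination h

theorem sub_ne_zero_of_sq_sub_eq_sq (hd : d ≠ 0) (h : γ ^ 2 - d = T ^ 2) : γ - T ≠ 0 :=
  left_ne_zero_of_mul <| (sub_mul_add_eq_of_sq_sub_eq_sq h).symm ▸ hd

end CommRing

section Field

variable {F : Type*} [Field F] {d : F}

def sqSubEqSqEquivUnits (hF : ringChar F ≠ 2) (hd : d ≠ 0) :
    {p : F × F // p.1 ^ 2 - d = p.2 ^ 2} ≃ Fˣ where
  toFun p := Units.mk0 (p.1.1 - p.1.2) (sub_ne_zero_of_sq_sub_eq_sq hd p.2)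
  invFun u := ⟨((u + d / u) / 2, (d / u - u) / 2), by
    have := Ring.two_ne_zero hF
    field_simp
    ring⟩
  left_inv := by
    rintro ⟨⟨γ, T⟩, h⟩
    have hadd : d / (γ - T) = γ + T := by
      rw [div_eq_iff (sub_ne_zero_of_sq_sub_eq_sq hd h), ← sub_mul_add_eq_of_sq_sub_eq_sq h, mul_comm]
    have := Ring.two_ne_zero hF
    ext <;> simp only [Units.val_mk0, hadd] <;> field_simp <;> ring
  right_inv u := by
    have := Ring.two_ne_zero hF
    ext
    simp only [Units.val_mk0]
    field_simp
    ring

theorem Nat.card_sq_sub_eq_sq [Finite F] (hF : ringChar F ≠ 2) (hd : d ≠ 0) :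
    Nat.card {p : F × F // p.1 ^ 2 - d = p.2 ^ 2} = Nat.card F - 1 := by
  rw [Nat.card_congr (sqSubEqSqEquivUnits hF hd), Nat.card_units]

variable [Fintype F] [DecidableEq F]

theorem card_sqrts_sq (hF : ringChar F ≠ 2) {r : F} (hr : r ≠ 0) :
    #{x : F | x ^ 2 = r ^ 2} = 2 := by
  have h := quadraticChar_card_sqrts hF (r ^ 2)
  rw [quadraticChar_sq_one' hr, Set.toFinset_ofPred] at h
  exact_mod_cast h

theorem card_sq_sub_eq_sq_eq_four_mul (hF : ringChar F ≠ 2)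
    (hnz : ∀ γ T : F, γ ^ 2 - d = T ^ 2 → γ ≠ 0 ∧ T ≠ 0) :
    #{p : F × F | p.1 ^ 2 - d = p.2 ^ 2} =
      4 * #{v : F | ∃ γ T : F, γ ^ 2 - d = T ^ 2 ∧ v = γ ^ 2} := by
  have hmaps : ∀ p ∈ ({p : F × F | p.1 ^ 2 - d = p.2 ^ 2} : Finset _),
      p.1 ^ 2 ∈ ({v : F | ∃ γ T : F, γ ^ 2 - d = T ^ 2 ∧ v = γ ^ 2} : Finset _) := by
    simp only [mem_filter_univ]
    exact fun p hp ↦ ⟨p.1, p.2, hp, rfl⟩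
  rw [card_eq_sum_card_fiberwise hmaps, mul_comm, ← smul_eq_mul, ← sum_const]
  refine sum_congr rfl fun v hv ↦ ?_
  obtain ⟨γ, T, h, rfl⟩ := (mem_filter_univ _).1 hv
  have hfiber : {p ∈ ({p : F × F | p.1 ^ 2 - d = p.2 ^ 2} : Finset _) | p.1 ^ 2 = γ ^ 2} =
      ({x : F | x ^ 2 = γ ^ 2} : Finset F) ×ˢ ({y : F | y ^ 2 = T ^ 2} : Finset F) := by
    ext ⟨x, y⟩
    simp only [mem_filter, mem_univ, true_and, mem_product]
    constructor
    · rintro ⟨hxy, hx⟩; exact ⟨hx, by linear_combination h - hxy + hx⟩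
    · rintro ⟨hx, hy⟩; exact ⟨by linear_combination hx + h - hy, hx⟩
  rw [hfiber, card_product, card_sqrts_sq hF (hnz γ T h).1, card_sqrts_sq hF (hnz γ T h).2]

end Field

theorem square_difference_pairs_general (F : Type*) [Field F] [Fintype F]
    (hq : Odd (Fintype.card F)) (c α : F)
    (h1 : ¬ IsSquare (α / c)) (h2 : ¬ IsSquare (-(α / c))) :
    Nat.card {p : F × F // p.1 ^ 2 - α / c = p.2 ^ 2} = Fintype.card F - 1 ∧
    (∀ γ T : F, γ ^ 2 - α / c = T ^ 2 → γ ≠ 0 ∧ T ≠ 0) ∧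
    Nat.card {v : F // v ≠ 0 ∧ ∃ γ T : F, γ ^ 2 - α / c = T ^ 2 ∧ v = γ ^ 2} =
      (Fintype.card F - 1) / 4 := by
  classical
  have hF : ringChar F ≠ 2 := fun h ↦ by
    have := FiniteField.even_card_of_char_two h
    rw [Nat.odd_iff] at hq
    omega
  have hd : α / c ≠ 0 := fun h ↦ h1 (h ▸ IsSquare.zero)
  have hnz : ∀ γ T : F, γ ^ 2 - α / c = T ^ 2 → γ ≠ 0 ∧ T ≠ 0 := fun _ _ h ↦
    ⟨ne_zero_left_of_sq_sub_eq_sq h2 h, ne_zero_right_of_sq_sub_eq_sq h1 h⟩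
  have hsol := Nat.card_sq_sub_eq_sq hF hd
  rw [Nat.card_eq_fintype_card (α := F)] at hsol
  refine ⟨hsol, hnz, ?_⟩
  have hvals : ∀ v : F, (v ≠ 0 ∧ ∃ γ T : F, γ ^ 2 - α / c = T ^ 2 ∧ v = γ ^ 2) ↔
      ∃ γ T : F, γ ^ 2 - α / c = T ^ 2 ∧ v = γ ^ 2 := fun v ↦
    and_iff_right_of_imp fun ⟨γ, T, h, hv⟩ ↦ hv ▸ pow_ne_zero 2 (hnz γ T h).1
  have h4 := card_sq_sub_eq_sq_eq_four_mul hF hnz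
  simp only [Nat.card_eq_fintype_card, Fintype.card_subtype, hvals] at hsol ⊢
  omega

/-- Let `q` be odd and `c, α ∈ F_q*` with both `α/c` and `−α/c` non-squares. Then the number of
pairs `(γ, T)` with `γ² − α/c = T²` is exactly `q − 1`, all such pairs have `γ ≠ 0` and
`T ≠ 0`, and the set of nonzero square values `γ²` occurring among solutions has cardinality
`(q − 1)/4`. -/
theorem square_difference_pairs (F : Type*) [Field F] [Fintype F]
    (hq : Odd (Fintype.card F)) (c α : F) (hc : c ≠ 0) (hα : α ≠ 0)
    (h1 : ¬ IsSquare (α / c)) (h2 : ¬ IsSquare (-(α / c))) :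
    Nat.card {p : F × F // p.1 ^ 2 - α / c = p.2 ^ 2} = Fintype.card F - 1 ∧
    (∀ γ T : F, γ ^ 2 - α / c = T ^ 2 → γ ≠ 0 ∧ T ≠ 0) ∧
    Nat.card {v : F // v ≠ 0 ∧ ∃ γ T : F, γ ^ 2 - α / c = T ^ 2 ∧ v = γ ^ 2} =
      (Fintype.card F - 1) / 4 :=
  square_difference_pairs_general F hq c α h1 h2
end
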